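/- arXiv:1612.07262 — 2 statements merged into one kernel-verified Lean document; each statement's English description precedes it below -/
import Mathlib

section
/- Let α ∈ [0,4] and θ_α = arccos(α/4). Then the crease energy C_α, defined as the infimum over N ∈ ℕ and over maps θ : ℤ → [−π/2, π/2] satisfying θ^i = sign(i)·θ_α for all |i| ≥ N of Σ_{i∈ℤ} [cos(θ^i + θ^{i+1}) − (α/2)(cos θ^i + cos θ^{i+1}) − m_α], coincides with the infimum of the same sum over all maps θ : ℤ → [−π/2, π/2] satisfying only the conditions at infinity lim_{i→+∞} θ^i = θ_α and lim_{i→−∞} θ^i = −θ_α. -/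
open Real MeasureTheory Filter Topology
open scoped ENNReal

noncomputable section

/-- The minimal angle `θ_α = arccos (α/4)`. -/
def thetaMin (α : ℝ) : ℝ := Real.arccos (α / 4)

/-- A single summand of the crease (transition) energy. -/
def creaseSummand (α : ℝ) (θ : ℤ → ℝ) (i : ℤ) : ℝ :=
  Real.cos (θ i + θ (i + 1)) - α / 2 * (Real.cos (θ i) + Real.cos (θ (i + 1)))
    + α ^ 2 / 8 + 1

/-- The (nonnegative-termed) sum over `ℤ`, with values in `[0, ∞]`. -/
def creaseSum (α : ℝ) (θ : ℤ → ℝ) : ℝ≥0∞ :=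
  ∑' i : ℤ, ENNReal.ofReal (creaseSummand α θ i)

/-- The crease energy `C_α`: infimum over `N ∈ ℕ` and maps `θ : ℤ → [−π/2, π/2]` with
`θ^i = sign i · θ_α` for `|i| ≥ N` of the sum of the transition energy. -/
def crease (α : ℝ) : ℝ≥0∞ :=
  sInf { c : ℝ≥0∞ | ∃ (N : ℕ) (θ : ℤ → ℝ),
    (∀ i, θ i ∈ Set.Icc (-(π / 2)) (π / 2)) ∧
    (∀ i : ℤ, (N : ℤ) ≤ |i| → θ i = (i.sign : ℝ) * thetaMin α) ∧
    c = creaseSum α θ }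

/-! Pinned configurations satisfy the limit conditions, so `C_α` is at least the relaxed
infimum. Conversely, given `θ` with the right limits, keep `θ` on `(-N, N)` and pin it to
`sign i · θ_α` outside. Since `cos θ_α = α / 4`, the pair energy vanishes at `(± θ_α, ± θ_α)`, so
pinning only drops nonnegative summands and adds the two junction terms
`E(-θ_α, θ^{-N+1})` and `E(θ^{N-1}, θ_α)`, which tend to `0` by continuity. -/

def pairEnergy (α x y : ℝ) : ℝ :=
  Real.cos (x + y) - α / 2 * (Real.cos x + Real.cos y) + α ^ 2 / 8 + 1

def pinTails (α : ℝ) (N : ℕ) (θ : ℤ → ℝ) (i : ℤ) : ℝ :=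
  if |i| < (N : ℤ) then θ i else (i.sign : ℝ) * thetaMin α

lemma creaseSummand_eq_pairEnergy (α : ℝ) (θ : ℤ → ℝ) (i : ℤ) :
    creaseSummand α θ i = pairEnergy α (θ i) (θ (i + 1)) := rfl

lemma pairEnergy_self_of_cos_eq {α x : ℝ} (hx : Real.cos x = α / 4) : pairEnergy α x x = 0 := by
  rw [pairEnergy, ← two_mul, ← two_mul, Real.cos_two_mul, hx]
  ring

lemma Filter.Tendsto.pairEnergy {ι : Type*} {l : Filter ι} {u v : ι → ℝ} {a b : ℝ} (α : ℝ)
    (hu : Tendsto u l (𝓝 a)) (hv : Tendsto v l (𝓝 b)) :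
    Tendsto (fun n => _root_.pairEnergy α (u n) (v n)) l (𝓝 (_root_.pairEnergy α a b)) := by
  have hcont : Continuous fun p : ℝ × ℝ => _root_.pairEnergy α p.1 p.2 := by
    unfold _root_.pairEnergy
    fun_prop
  exact Tendsto.comp (f := fun n => (u n, v n)) (hcont.tendsto (a, b)) (hu.prodMk_nhds hv)

section thetaMin

variable {α : ℝ}

lemma cos_thetaMin (hα : α ∈ Set.Icc (0 : ℝ) 4) : Real.cos (thetaMin α) = α / 4 :=
  Real.cos_arccos (by linarith [hα.1]) (by linarith [hα.2])

lemma pairEnergy_thetaMin (hα : α ∈ Set.Icc (0 : ℝ) 4) :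
    pairEnergy α (thetaMin α) (thetaMin α) = 0 :=
  pairEnergy_self_of_cos_eq (cos_thetaMin hα)

lemma pairEnergy_neg_thetaMin (hα : α ∈ Set.Icc (0 : ℝ) 4) :
    pairEnergy α (-thetaMin α) (-thetaMin α) = 0 :=
  pairEnergy_self_of_cos_eq (by rw [Real.cos_neg, cos_thetaMin hα])

lemma abs_thetaMin_le (hα : 0 ≤ α) : |thetaMin α| ≤ π / 2 := by
  rw [thetaMin, abs_of_nonneg (Real.arccos_nonneg _)]
  exact Real.arccos_le_pi_div_two.mpr (by linarith)

end thetaMin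

section pinTails

variable {α : ℝ} {N : ℕ} {θ : ℤ → ℝ} {i : ℤ}

lemma pinTails_of_abs_lt (h : |i| < N) : pinTails α N θ i = θ i := if_pos h

lemma pinTails_of_le_abs (h : (N : ℤ) ≤ |i|) :
    pinTails α N θ i = (i.sign : ℝ) * thetaMin α := if_neg h.not_gt

lemma pinTails_of_le (hN : 0 < N) (h : (N : ℤ) ≤ i) : pinTails α N θ i = thetaMin α := by
  rw [pinTails_of_le_abs (h.trans (le_abs_self i)), Int.sign_eq_one_of_pos (by omega)]
  simp

lemma pinTails_of_le_neg (hN : 0 < N) (h : i ≤ -(N : ℤ)) :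
    pinTails α N θ i = -thetaMin α := by
  rw [pinTails_of_le_abs (by rw [abs_of_neg (by omega)]; omega),
    Int.sign_eq_neg_one_of_neg (by omega)]
  simp

lemma pinTails_mem_Icc (hα : 0 ≤ α) (hθ : ∀ i, θ i ∈ Set.Icc (-(π / 2)) (π / 2)) (i : ℤ) :
    pinTails α N θ i ∈ Set.Icc (-(π / 2)) (π / 2) := by
  unfold pinTails
  split_ifs
  · exact hθ i
  · rw [Set.mem_Icc, ← abs_le, abs_mul]
    have hsign : |(i.sign : ℝ)| ≤ 1 := by
      rcases Int.sign_trichotomy i with h | h | h <;> simp [h]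
    exact (mul_le_of_le_one_left (abs_nonneg _) hsign).trans (abs_thetaMin_le hα)

lemma ofReal_creaseSummand_pinTails_le (hα : α ∈ Set.Icc (0 : ℝ) 4) (hN : 0 < N) (i : ℤ) :
    ENNReal.ofReal (creaseSummand α (pinTails α N θ) i) ≤
      ENNReal.ofReal (creaseSummand α θ i)
        + (if i = -N then ENNReal.ofReal (pairEnergy α (-thetaMin α) (θ (-N + 1))) else 0)
        + (if i = N - 1 then ENNReal.ofReal (pairEnergy α (θ (N - 1)) (thetaMin α)) else 0) := by
  rw [creaseSummand_eq_pairEnergy]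
  rcases lt_trichotomy i (-N) with hlow | rfl | hlow
  · rw [pinTails_of_le_neg hN hlow.le, pinTails_of_le_neg hN (by omega),
      pairEnergy_neg_thetaMin hα, ENNReal.ofReal_zero]
    exact zero_le
  · rw [pinTails_of_le_neg hN le_rfl, pinTails_of_abs_lt (abs_lt.mpr ⟨by omega, by omega⟩),
      if_pos rfl]
    exact le_add_self.trans le_self_add
  rcases lt_trichotomy i (N - 1) with hhigh | rfl | hhigh
  · rw [pinTails_of_abs_lt (abs_lt.mpr ⟨hlow, by omega⟩),
      pinTails_of_abs_lt (abs_lt.mpr ⟨by omega, by omega⟩), ← creaseSummand_eq_pairEnergy]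
    exact le_self_add.trans le_self_add
  · rw [pinTails_of_abs_lt (abs_lt.mpr ⟨hlow, by omega⟩), sub_add_cancel,
      pinTails_of_le hN le_rfl, if_pos rfl]
    exact le_add_self
  · rw [pinTails_of_le hN (by omega), pinTails_of_le hN (by omega),
      pairEnergy_thetaMin hα, ENNReal.ofReal_zero]
    exact zero_le

lemma creaseSum_pinTails_le (hα : α ∈ Set.Icc (0 : ℝ) 4) (hN : 0 < N) :
    creaseSum α (pinTails α N θ) ≤ creaseSum α θ
      + ENNReal.ofReal (pairEnergy α (-thetaMin α) (θ (-N + 1)))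
      + ENNReal.ofReal (pairEnergy α (θ (N - 1)) (thetaMin α)) := by
  calc creaseSum α (pinTails α N θ)
      ≤ ∑' i, (ENNReal.ofReal (creaseSummand α θ i)
        + (if i = -N then ENNReal.ofReal (pairEnergy α (-thetaMin α) (θ (-N + 1))) else 0)
        + (if i = N - 1 then ENNReal.ofReal (pairEnergy α (θ (N - 1)) (thetaMin α)) else 0)) :=
        ENNReal.tsum_le_tsum (ofReal_creaseSummand_pinTails_le hα hN)
    _ = _ := by rw [ENNReal.tsum_add, ENNReal.tsum_add, tsum_ite_eq, tsum_ite_eq, creaseSum]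

end pinTails

lemma crease_le_creaseSum_of_pinned {α : ℝ} {N : ℕ} {θ : ℤ → ℝ}
    (hθ : ∀ i, θ i ∈ Set.Icc (-(π / 2)) (π / 2))
    (hpinned : ∀ i : ℤ, (N : ℤ) ≤ |i| → θ i = (i.sign : ℝ) * thetaMin α) :
    crease α ≤ creaseSum α θ :=
  sInf_le ⟨N, θ, hθ, hpinned, rfl⟩

lemma crease_le_creaseSum {α : ℝ} (hα : α ∈ Set.Icc (0 : ℝ) 4) {θ : ℤ → ℝ}
    (hθ : ∀ i, θ i ∈ Set.Icc (-(π / 2)) (π / 2))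
    (htop : Tendsto θ atTop (𝓝 (thetaMin α))) (hbot : Tendsto θ atBot (𝓝 (-thetaMin α))) :
    crease α ≤ creaseSum α θ := by
  have hleft : Tendsto (fun N : ℕ => θ (-N + 1)) atTop (𝓝 (-thetaMin α)) :=
    hbot.comp <| tendsto_atBot_add_const_right _ _ <|
      tendsto_neg_atTop_atBot.comp tendsto_natCast_atTop_atTop
  have hright : Tendsto (fun N : ℕ => θ (N - 1)) atTop (𝓝 (thetaMin α)) :=
    htop.comp <| by
      simpa only [sub_eq_add_neg] using
        tendsto_atTop_add_const_right atTop (-1 : ℤ) tendsto_natCast_atTop_atTop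
  have hjunctions : Tendsto (fun N : ℕ => creaseSum α θ
      + ENNReal.ofReal (pairEnergy α (-thetaMin α) (θ (-N + 1)))
      + ENNReal.ofReal (pairEnergy α (θ (N - 1)) (thetaMin α))) atTop (𝓝 (creaseSum α θ)) := by
    have hl := ENNReal.tendsto_ofReal ((tendsto_const_nhds (x := -thetaMin α)).pairEnergy α hleft)
    have hr := ENNReal.tendsto_ofReal (hright.pairEnergy α (tendsto_const_nhds (x := thetaMin α)))
    rw [pairEnergy_neg_thetaMin hα, ENNReal.ofReal_zero] at hl
    rw [pairEnergy_thetaMin hα, ENNReal.ofReal_zero] at hr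
    simpa using (tendsto_const_nhds.add hl).add hr
  refine ge_of_tendsto hjunctions ((eventually_gt_atTop 0).mono fun N hN => ?_)
  exact (crease_le_creaseSum_of_pinned (pinTails_mem_Icc hα.1 hθ)
    (fun _ => pinTails_of_le_abs)).trans (creaseSum_pinTails_le hα hN)

section pinned

variable {θ : ℤ → ℝ} {N : ℕ} {c : ℝ}

lemma tendsto_atTop_of_eq_sign_mul (h : ∀ i : ℤ, (N : ℤ) ≤ |i| → θ i = (i.sign : ℝ) * c) :
    Tendsto θ atTop (𝓝 c) := by
  refine tendsto_const_nhds.congr' ?_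
  filter_upwards [eventually_ge_atTop (max (N : ℤ) 1)] with i hi
  rw [h i ((le_of_max_le_left hi).trans (le_abs_self i)),
    Int.sign_eq_one_of_pos (by omega)]
  simp

lemma tendsto_atBot_of_eq_sign_mul (h : ∀ i : ℤ, (N : ℤ) ≤ |i| → θ i = (i.sign : ℝ) * c) :
    Tendsto θ atBot (𝓝 (-c)) := by
  refine tendsto_const_nhds.congr' ?_
  filter_upwards [eventually_le_atBot (min (-(N : ℤ)) (-1))] with i hi
  rw [h i (by rw [abs_of_neg (by omega)]; omega), Int.sign_eq_neg_one_of_neg (by omega)]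
  simp

end pinned

/-- the crease energy `C_α` coincides with the infimum of the same sum over
maps `θ : ℤ → [−π/2, π/2]` satisfying only `θ^i → θ_α` as `i → +∞` and `θ^i → −θ_α`
as `i → −∞`. -/
theorem crease_energy_relaxed_boundary_condition (α : ℝ) (hα : α ∈ Set.Icc (0 : ℝ) 4) :
    crease α = sInf { c : ℝ≥0∞ | ∃ θ : ℤ → ℝ,
      (∀ i, θ i ∈ Set.Icc (-(π / 2)) (π / 2)) ∧
      Filter.Tendsto θ Filter.atTop (𝓝 (thetaMin α)) ∧
      Filter.Tendsto θ Filter.atBot (𝓝 (-thetaMin α)) ∧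
      c = creaseSum α θ } := by
  refine le_antisymm (le_sInf ?_) (sInf_le_sInf ?_)
  · rintro c ⟨θ, hθ, htop, hbot, rfl⟩
    exact crease_le_creaseSum hα hθ htop hbot
  · rintro c ⟨N, θ, hθ, hpinned, rfl⟩
    exact ⟨θ, hθ, tendsto_atTop_of_eq_sign_mul hpinned, tendsto_atBot_of_eq_sign_mul hpinned, rfl⟩
end
end

section
/- For every α ∈ [0,4) the crease energy C_α is strictly positive, where C_α is the infimum over N ∈ ℕ and over maps θ : ℤ → [−π/2, π/2] with θ^i = sign(i)·θ_α for all |i| ≥ N of Σ_{i∈ℤ} [cos(θ^i + θ^{i+1}) − (α/2)(cos θ^i + cos θ^{i+1}) − m_α]. -/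
open Real MeasureTheory Filter Topology
open scoped ENNReal

noncomputable section

/-!
An admissible `θ` runs from `-θ_α` to `θ_α`, so some step has `θ^i < θ_α/2 ≤ θ^{i+1}`.
On the rectangle `[-π/2, θ_α/2] × [θ_α/2, π/2]` the summand, written as
`2 (cos((x+y)/2) - (α/4) cos((x-y)/2))² + (α²/8) sin²((x-y)/2)`, vanishes nowhere: the only
candidate `x = y = θ_α/2` would force `cos(θ_α/2) = cos θ_α`. By compactness it is bounded
below there by some `ε > 0`, which then bounds every admissible sum from below.
-/

lemma exists_apply_lt_le_apply_add_one {β : Type*} [LinearOrder β] {f : ℤ → β} {c : β}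
    {a b : ℤ} (hab : a ≤ b) (ha : f a < c) (hb : c ≤ f b) :
    ∃ i, f i < c ∧ c ≤ f (i + 1) := by
  induction b, hab using Int.leInduction with
  | base => exact absurd hb ha.not_ge
  | succ b _ ih =>
    by_cases h : c ≤ f b
    · exact ih h
    · exact ⟨b, not_le.mp h, hb⟩

lemma exists_step_across_half {θ : ℤ → ℝ} {T : ℝ} {N : ℕ} (hT : 0 < T)
    (hθ : ∀ i : ℤ, (N : ℤ) ≤ |i| → θ i = (i.sign : ℝ) * T) :
    ∃ i, θ i < T / 2 ∧ T / 2 ≤ θ (i + 1) := by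
  have hN : (N : ℤ) ≤ |(N : ℤ) + 1| := (by omega : (N : ℤ) ≤ N + 1).trans (le_abs_self _)
  have hlo : θ (-(N + 1)) = -T := by
    rw [hθ _ (by rwa [abs_neg]), Int.sign_eq_neg_one_of_neg (by omega)]
    simp
  have hhi : θ (N + 1) = T := by
    rw [hθ _ hN, Int.sign_eq_one_of_pos (by omega)]
    simp
  exact exists_apply_lt_le_apply_add_one (a := -(N + 1)) (b := N + 1) (by omega)
    (by linarith) (by linarith)

lemma thetaMin_pos {α : ℝ} (hα : α < 4) : 0 < thetaMin α :=
  Real.arccos_pos.mpr (by linarith)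

lemma thetaMin_le_pi_div_two {α : ℝ} (hα : 0 ≤ α) : thetaMin α ≤ π / 2 :=
  Real.arccos_le_pi_div_two.mpr (by linarith)

lemma div_four_lt_cos_half_thetaMin {α : ℝ} (hα₀ : -4 ≤ α) (hα : α < 4) :
    α / 4 < Real.cos (thetaMin α / 2) := by
  have hT := thetaMin_pos hα
  calc α / 4 = Real.cos (thetaMin α) := (Real.cos_arccos (by linarith) (by linarith)).symm
    _ < Real.cos (thetaMin α / 2) :=
      Real.cos_lt_cos_of_nonneg_of_le_pi (by linarith) (Real.arccos_le_pi _) (by linarith)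

lemma pairEnergy_eq (α x y : ℝ) :
    pairEnergy α x y =
      2 * (Real.cos ((x + y) / 2) - α / 4 * Real.cos ((x - y) / 2)) ^ 2
        + α ^ 2 / 8 * Real.sin ((x - y) / 2) ^ 2 := by
  have hcos2 := Real.cos_sq ((x + y) / 2)
  rw [show 2 * ((x + y) / 2) = x + y by ring] at hcos2
  rw [pairEnergy, Real.cos_add_cos, Real.sin_sq]
  linarith

lemma pairEnergy_pos {α x y : ℝ} (hα : α ∈ Set.Ico (0 : ℝ) 4)
    (hx : x ∈ Set.Icc (-(π / 2)) (thetaMin α / 2)) (hy : y ∈ Set.Icc (thetaMin α / 2) (π / 2)) :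
    0 < pairEnergy α x y := by
  obtain ⟨hα0, hα4⟩ := hα
  have hT := thetaMin_pos hα4
  have hT2 := thetaMin_le_pi_div_two hα0
  have hpi := Real.pi_pos
  have hu : 0 < Real.cos ((x + y) / 2) :=
    Real.cos_pos_of_mem_Ioo ⟨by linarith [hx.1, hy.1], by linarith [hx.2, hy.2]⟩
  rw [pairEnergy_eq]
  by_contra! hle
  have hsq : Real.cos ((x + y) / 2) - α / 4 * Real.cos ((x - y) / 2) = 0 ∧
      α * Real.sin ((x - y) / 2) = 0 := by
    constructor <;> nlinarith [sq_nonneg (Real.cos ((x + y) / 2) - α / 4 * Real.cos ((x - y) / 2)),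
      sq_nonneg (α * Real.sin ((x - y) / 2))]
  rcases mul_eq_zero.mp hsq.2 with rfl | hsin
  · linarith [hsq.1]
  have hxy : x = y := by
    have := (Real.sin_eq_zero_iff_of_lt_of_lt (by linarith [hx.1, hy.2])
      (by linarith [hx.2, hy.1])).mp hsin
    linarith
  have hx' : x = thetaMin α / 2 := le_antisymm hx.2 (hxy ▸ hy.1)
  have := div_four_lt_cos_half_thetaMin (by linarith) hα4
  rw [← hxy, hx', sub_self, zero_div, Real.cos_zero, add_halves] at hsq
  linarith [hsq.1]

lemma exists_pos_le_pairEnergy {α : ℝ} (hα : α ∈ Set.Ico (0 : ℝ) 4) :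
    ∃ ε > 0, ∀ x ∈ Set.Icc (-(π / 2)) (thetaMin α / 2), ∀ y ∈ Set.Icc (thetaMin α / 2) (π / 2),
      ε ≤ pairEnergy α x y := by
  obtain ⟨ε, hε, hεle⟩ :=
    (isCompact_Icc.prod isCompact_Icc).exists_forall_le' (a := 0)
      (f := fun p : ℝ × ℝ ↦ pairEnergy α p.1 p.2)
      (by unfold pairEnergy; fun_prop) (fun p hp ↦ pairEnergy_pos hα hp.1 hp.2)
  exact ⟨ε, hε, fun x hx y hy ↦ hεle (x, y) ⟨hx, hy⟩⟩

/-- for `α ∈ [0,4)` the crease energy is strictly positive. -/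
theorem crease_energy_pos (α : ℝ) (hα : α ∈ Set.Ico (0 : ℝ) 4) :
    0 < crease α := by
  obtain ⟨ε, hε, hεle⟩ := exists_pos_le_pairEnergy hα
  refine (ENNReal.ofReal_pos.mpr hε).trans_le (le_sInf ?_)
  rintro _ ⟨N, θ, hθ, hθN, rfl⟩
  obtain ⟨i, hi, hi1⟩ := exists_step_across_half (thetaMin_pos hα.2) hθN
  calc ENNReal.ofReal ε
      ≤ ENNReal.ofReal (creaseSummand α θ i) := by
        rw [creaseSummand_eq_pairEnergy]
        exact ENNReal.ofReal_le_ofReal (hεle _ ⟨(hθ i).1, hi.le⟩ _ ⟨hi1, (hθ (i + 1)).2⟩)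
    _ ≤ creaseSum α θ := ENNReal.le_tsum i
end
end
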